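/- The kernel K(z,w̄) := (1/(G(z)G(w̄)))·((G(z)−G(w̄))/(z−w̄) + G(z)G(w̄))² is positive semi-definite on ℂ∖ℝ: for all z₁,…,zₙ ∈ ℂ∖ℝ and c₁,…,cₙ ∈ ℂ, Σⱼₖ cⱼ c̄ₖ K(zⱼ, z̄ₖ) ≥ 0. -/

import Mathlib

open MeasureTheory Complex
open scoped ComplexConjugate ComplexOrder Matrix ENNReal

/-!
Write `r_z x = (z - x)⁻¹`, so that `G z = ∫ r_z dμ`. The resolvent identity
`r_z - r_w = (w - z) r_z r_w`, together with differentiation under the integral on the diagonal,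
shows that the divided difference of `G` is `-∫ r_z r_w dμ`. Since `conj ∘ r_w = r_{w̄}`, this turns
`(G z - G w̄) / (z - w̄) + G z G w̄` into minus the covariance `∫ (r_z - G z) conj (r_w - G w) dμ`,
a Gram kernel in `L²(μ)`. The kernel is therefore the Hadamard product of the rank-one kernel
`(G z)⁻¹ conj (G w)⁻¹` with the square of a Gram kernel, and the Schur product theorem applies.
-/

section Covariance

variable {α 𝕜 : Type*} [MeasurableSpace α] {μ : Measure α} [RCLike 𝕜]

theorem posSemidef_integral_mul_conj {ι : Type*} [Finite ι] {f : ι → α → 𝕜}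
    (hf : ∀ i, MemLp (f i) 2 μ) :
    (Matrix.of fun i j => ∫ x, f i x * conj (f j x) ∂μ).PosSemidef := by
  have hgram : (Matrix.of fun i j => ∫ x, f i x * conj (f j x) ∂μ)
      = (Matrix.gram 𝕜 fun i => (hf i).toLp (f i))ᵀ := by
    ext i j
    simp only [Matrix.of_apply, Matrix.transpose_apply, Matrix.gram_apply, L2.inner_def,
      RCLike.inner_apply]
    exact integral_congr_ae ((hf i).coeFn_toLp.mp ((hf j).coeFn_toLp.mono
      fun x hj hi => by simp only [hi, hj]))
  rw [hgram]
  exact (Matrix.posSemidef_gram 𝕜 _).transpose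

theorem integral_sub_integral_mul_conj_sub_integral [IsProbabilityMeasure μ] {f g : α → 𝕜}
    (hf : MemLp f 2 μ) (hg : MemLp g 2 μ) :
    ∫ x, (f x - ∫ y, f y ∂μ) * conj (g x - ∫ y, g y ∂μ) ∂μ
      = ∫ x, f x * conj (g x) ∂μ - (∫ x, f x ∂μ) * conj (∫ x, g x ∂μ) := by
  have hfg : Integrable (fun x => f x * conj (g x)) μ := hf.integrable_mul hg.star
  have hf1 : Integrable f μ := hf.integrable one_le_two
  have hg1 : Integrable (fun x => conj (g x)) μ := hg.star.integrable one_le_two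
  simp only [map_sub, sub_mul, mul_sub]
  rw [integral_sub, integral_sub, integral_sub,
    integral_mul_const, integral_const_mul, integral_const, integral_conj]
  · simp
  exacts [hf1.mul_const _, integrable_const _, hfg, hg1.const_mul _,
    hfg.sub (hg1.const_mul _), (hf1.mul_const _).sub (integrable_const _)]

end Covariance

noncomputable def cauchyTransform (μ : Measure ℝ) (z : ℂ) : ℂ := ∫ x : ℝ, (z - x)⁻¹ ∂μ

section Resolvent

variable {μ : Measure ℝ} {z w : ℂ}

theorem sub_ofReal_ne_zero (hz : z.im ≠ 0) (x : ℝ) : z - x ≠ 0 := by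
  intro h
  apply hz
  simpa using congrArg im h

theorem norm_inv_sub_ofReal_le (hz : z.im ≠ 0) (x : ℝ) : ‖(z - x)⁻¹‖ ≤ |z.im|⁻¹ := by
  rw [norm_inv]
  refine inv_anti₀ (abs_pos.mpr hz) ?_
  simpa using abs_im_le_norm (z - x)

theorem continuous_inv_sub_ofReal (hz : z.im ≠ 0) : Continuous fun x : ℝ => (z - x)⁻¹ :=
  (continuous_const.sub continuous_ofReal).inv₀ (sub_ofReal_ne_zero hz)

theorem memLp_inv_sub_ofReal [IsFiniteMeasure μ] (hz : z.im ≠ 0) (p : ℝ≥0∞) :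
    MemLp (fun x : ℝ => (z - x)⁻¹) p μ :=
  .of_bound (continuous_inv_sub_ofReal hz).aestronglyMeasurable _
    (ae_of_all _ (norm_inv_sub_ofReal_le hz))

theorem integrable_inv_sub_ofReal [IsFiniteMeasure μ] (hz : z.im ≠ 0) :
    Integrable (fun x : ℝ => (z - x)⁻¹) μ :=
  memLp_one_iff_integrable.mp (memLp_inv_sub_ofReal hz 1)

theorem conj_cauchyTransform (μ : Measure ℝ) (z : ℂ) :
    conj (cauchyTransform μ z) = cauchyTransform μ (conj z) := by
  simp [cauchyTransform, ← integral_conj]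

theorem half_abs_im_le_abs_im_of_mem_ball (hw : w ∈ Metric.ball z (|z.im| / 2)) :
    |z.im| / 2 ≤ |w.im| := by
  have h : |z.im| - |w.im| ≤ ‖z - w‖ := by
    simpa using (abs_sub_abs_le_abs_sub z.im w.im).trans (abs_im_le_norm (z - w))
  rw [Metric.mem_ball, dist_comm, dist_eq_norm] at hw
  linarith

theorem hasDerivAt_cauchyTransform [IsFiniteMeasure μ] (hz : z.im ≠ 0) :
    HasDerivAt (cauchyTransform μ) (-∫ x : ℝ, (z - x)⁻¹ * (z - x)⁻¹ ∂μ) z := by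
  set ε := |z.im| / 2
  have hε : 0 < ε := by positivity
  have him : ∀ w ∈ Metric.ball z ε, w.im ≠ 0 := fun w hw h0 => by
    have := half_abs_im_le_abs_im_of_mem_ball hw
    rw [h0, abs_zero] at this
    exact this.not_gt hε
  rw [← integral_neg]
  refine (hasDerivAt_integral_of_dominated_loc_of_deriv_le (bound := fun _ => (ε⁻¹) ^ 2)
    (F' := fun w (x : ℝ) => -((w - x)⁻¹ * (w - x)⁻¹)) (Metric.ball_mem_nhds z hε)
    (.of_forall fun w => ?_) (integrable_inv_sub_ofReal hz) ?_ ?_ (integrable_const _) ?_).2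
  · exact (measurable_const.sub measurable_ofReal).inv.aestronglyMeasurable
  · exact ((continuous_inv_sub_ofReal hz).mul
      (continuous_inv_sub_ofReal hz)).neg.aestronglyMeasurable
  · refine ae_of_all _ fun x w hw => ?_
    have hbound : ‖(w - x)⁻¹‖ ≤ ε⁻¹ :=
      (norm_inv_sub_ofReal_le (him w hw) x).trans
        (inv_anti₀ hε (half_abs_im_le_abs_im_of_mem_ball hw))
    rw [norm_neg, norm_mul, sq]
    exact mul_le_mul hbound hbound (norm_nonneg _) (inv_nonneg.mpr hε.le)
  · refine ae_of_all _ fun x w hw => ?_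
    refine (((hasDerivAt_id w).sub_const (x : ℂ)).inv
      (sub_ofReal_ne_zero (him w hw) x)).congr_deriv ?_
    rw [id, neg_div, one_div, sq, mul_inv]

theorem cauchyTransform_sub [IsFiniteMeasure μ] (hz : z.im ≠ 0) (hw : w.im ≠ 0) :
    cauchyTransform μ z - cauchyTransform μ w
      = (w - z) * ∫ x : ℝ, (z - x)⁻¹ * (w - x)⁻¹ ∂μ := by
  rw [cauchyTransform, cauchyTransform, ← integral_sub (integrable_inv_sub_ofReal hz)
    (integrable_inv_sub_ofReal hw), ← integral_const_mul]
  refine integral_congr_ae (ae_of_all _ fun x => ?_)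
  have := sub_ofReal_ne_zero hz x
  have := sub_ofReal_ne_zero hw x
  field_simp
  ring

theorem dslope_cauchyTransform [IsFiniteMeasure μ] (hz : z.im ≠ 0) (hw : w.im ≠ 0) :
    dslope (cauchyTransform μ) w z = -∫ x : ℝ, (z - x)⁻¹ * (w - x)⁻¹ ∂μ := by
  rcases eq_or_ne z w with rfl | hzw
  · rw [dslope_same, (hasDerivAt_cauchyTransform hz).deriv]
  · rw [dslope_of_ne _ hzw, slope_def_field, cauchyTransform_sub hz hw,
      div_eq_iff (sub_ne_zero.mpr hzw)]
    ring

theorem integral_centered_inv_sub_mul_conj [IsProbabilityMeasure μ] (hz : z.im ≠ 0)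
    (hw : w.im ≠ 0) :
    ∫ x : ℝ, ((z - x)⁻¹ - cauchyTransform μ z) * conj ((w - x)⁻¹ - cauchyTransform μ w) ∂μ
      = -(dslope (cauchyTransform μ) (conj w) z
          + cauchyTransform μ z * cauchyTransform μ (conj w)) := by
  have hw' : (conj w).im ≠ 0 := by simpa using hw
  rw [cauchyTransform, cauchyTransform,
    integral_sub_integral_mul_conj_sub_integral (memLp_inv_sub_ofReal hz 2)
      (memLp_inv_sub_ofReal hw 2), dslope_cauchyTransform hz hw', ← cauchyTransform,
    ← cauchyTransform, conj_cauchyTransform]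
  simp only [map_inv₀, map_sub, conj_ofReal]
  ring

end Resolvent

theorem Matrix.PosSemidef.sum_mul_conj_mul_nonneg {ι 𝕜 : Type*} [Fintype ι] [RCLike 𝕜]
    {M : Matrix ι ι 𝕜} (hM : M.PosSemidef) (c : ι → 𝕜) :
    0 ≤ ∑ j, ∑ k, c j * conj (c k) * M j k := by
  convert hM.dotProduct_mulVec_nonneg (star c) using 1
  simp only [dotProduct, mulVec, Finset.mul_sum, Pi.star_apply, RCLike.star_def,
    RCLike.conj_conj]
  refine Finset.sum_congr rfl fun j _ => Finset.sum_congr rfl fun k _ => ?_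
  ring

theorem resolvent_kernel_posSemidef_general
    (μ : Measure ℝ) [IsProbabilityMeasure μ]
    (G : ℂ → ℂ) (hG : ∀ z : ℂ, G z = ∫ x : ℝ, (z - (x : ℂ))⁻¹ ∂μ)
    (ker : ℂ → ℂ → ℂ)
    (hker : ∀ z w : ℂ, ker z w =
      if z = w then (G z * G z)⁻¹ * (deriv G z + G z * G z) ^ 2
      else (G z * G w)⁻¹ * ((G z - G w) / (z - w) + G z * G w) ^ 2) :
    ∀ (n : ℕ) (z : Fin n → ℂ) (c : Fin n → ℂ), (∀ j, (z j).im ≠ 0) →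
      0 ≤ (∑ j : Fin n, ∑ k : Fin n,
            c j * starRingEnd ℂ (c k) * ker (z j) (starRingEnd ℂ (z k))).re
      ∧ (∑ j : Fin n, ∑ k : Fin n,
            c j * starRingEnd ℂ (c k) * ker (z j) (starRingEnd ℂ (z k))).im = 0 := by
  intro n z c hz
  obtain rfl : G = cauchyTransform μ := funext hG
  have hker_dslope : ∀ z w, ker z w = (cauchyTransform μ z * cauchyTransform μ w)⁻¹
      * (dslope (cauchyTransform μ) w z + cauchyTransform μ z * cauchyTransform μ w) ^ 2 := by
    intro z w
    rw [hker]
    split_ifs with h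
    · rw [h, dslope_same]
    · rw [dslope_of_ne _ h, slope_def_field]
  set C : Matrix (Fin n) (Fin n) ℂ := .of fun j k => ∫ x : ℝ,
    ((z j - x)⁻¹ - cauchyTransform μ (z j)) * conj ((z k - x)⁻¹ - cauchyTransform μ (z k)) ∂μ
  have hC : C.PosSemidef := posSemidef_integral_mul_conj fun j =>
    (memLp_inv_sub_ofReal (hz j) 2).sub (memLp_const _)
  set a : Fin n → ℂ := fun j => (cauchyTransform μ (z j))⁻¹
  have hK := (Matrix.posSemidef_vecMulVec_self_star a).hadamard (hC.hadamard hC)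
  have hentry : ∀ j k, ker (z j) (conj (z k)) = (Matrix.vecMulVec a (star a) ⊙ (C ⊙ C)) j k := by
    intro j k
    simp only [Matrix.hadamard_apply, Matrix.vecMulVec_apply, C, Matrix.of_apply,
      integral_centered_inv_sub_mul_conj (hz j) (hz k), hker_dslope, Pi.star_apply,
      RCLike.star_def, a, map_inv₀, conj_cauchyTransform, mul_inv]
    ring
  simpa [hentry, Complex.nonneg_iff, eq_comm] using hK.sum_mul_conj_mul_nonneg c

/-- Positive semi-definiteness of the kernel
`K(z,w̄) = (G(z)G(w̄))⁻¹ ((G(z)−G(w̄))/(z−w̄) + G(z)G(w̄))²` on `ℂ ∖ ℝ`,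
with the removable singularity at `z = w̄` interpreted via `G'`. -/
theorem resolvent_kernel_posSemidef
    (μ : Measure ℝ) [IsProbabilityMeasure μ]
    (K : Set ℝ) (hK : IsCompact K) (hμK : μ Kᶜ = 0)
    (G : ℂ → ℂ) (hG : ∀ z : ℂ, G z = ∫ x : ℝ, (z - (x : ℂ))⁻¹ ∂μ)
    (ker : ℂ → ℂ → ℂ)
    (hker : ∀ z w : ℂ, ker z w =
      if z = w then (G z * G z)⁻¹ * (deriv G z + G z * G z) ^ 2
      else (G z * G w)⁻¹ * ((G z - G w) / (z - w) + G z * G w) ^ 2) :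
    ∀ (n : ℕ) (z : Fin n → ℂ) (c : Fin n → ℂ), (∀ j, (z j).im ≠ 0) →
      0 ≤ (∑ j : Fin n, ∑ k : Fin n,
            c j * starRingEnd ℂ (c k) * ker (z j) (starRingEnd ℂ (z k))).re
      ∧ (∑ j : Fin n, ∑ k : Fin n,
            c j * starRingEnd ℂ (c k) * ker (z j) (starRingEnd ℂ (z k))).im = 0 :=
  resolvent_kernel_posSemidef_general μ G hG ker hker
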